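/- arXiv:1503.05573 — 3 statements merged into one kernel-verified Lean document; each statement's English description precedes it below -/
import Mathlib

section
/- Let K be a field (e.g. ℂ), V a finite-dimensional K-vector space, and k ≥ 1. Let U and W be k-dimensional linear subspaces of V with U ∩ W = 0. Suppose x_0, x_1, ..., x_k is a chain of k-dimensional linear subspaces of V with x_0 = U, x_k = W, such that consecutive members lie on a common projective line in the Grassmannian, i.e. dim(x_i ∩ x_{i+1}) ≥ k − 1 for all 0 ≤ i ≤ k − 1. Then every x_i is contained in U + W. (Hence every path of length k in the Grassmannian G(k, n) connecting two points u, v corresponding to subspaces U, V with U ∩ V = 0 is contained in the sub-Grassmannian G(k, U ⊕ V).) -/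
/-!
Let `S` be the span of `x_0, …, x_k`. Each step of the chain enlarges the span of the members
seen so far by at most one dimension, since `x_{i+1}` meets `x_i` in codimension at most one; so
`dim S ≤ k + k`. But `S` contains `U ⊕ W`, which already has dimension `2k`, hence `S = U ⊕ W`.
-/

open Module

namespace Submodule

variable {K V : Type*} [DivisionRing K] [AddCommGroup V] [Module K V] [FiniteDimensional K V]

theorem finrank_sup_le_add_one_of_le {A B C : Submodule K V} (hBA : B ≤ A)
    (hC : finrank K C ≤ finrank K ↥(B ⊓ C) + 1) : finrank K ↥(A ⊔ C) ≤ finrank K A + 1 := by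
  have hsum := finrank_sup_add_finrank_inf_eq A C
  have hinf : finrank K ↥(B ⊓ C) ≤ finrank K ↥(A ⊓ C) := finrank_mono (inf_le_inf_right C hBA)
  omega

theorem finrank_partialSups_le {n : ℕ} (x : Fin (n + 1) → Submodule K V)
    (hstep : ∀ i : Fin n, finrank K (x i.succ) ≤ finrank K ↥(x i.castSucc ⊓ x i.succ) + 1)
    (i : Fin (n + 1)) : finrank K (partialSups x i) ≤ finrank K (x 0) + i := by
  induction i using Fin.induction with
  | zero =>
    rw [← bot_eq_zero, partialSups_bot]
    exact Nat.le_add_right _ _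
  | succ i ih =>
    rw [← Fin.orderSucc_castSucc, partialSups_succ, Fin.orderSucc_castSucc, Fin.val_succ]
    have := finrank_sup_le_add_one_of_le (le_partialSups x i.castSucc) (hstep i)
    rw [Fin.val_castSucc] at ih
    omega

theorem eq_sup_of_finrank_le_of_inf_eq_bot {U W S : Submodule K V} (hUS : U ≤ S) (hWS : W ≤ S)
    (hUW : U ⊓ W = ⊥) (hS : finrank K S ≤ finrank K U + finrank K W) : S = U ⊔ W := by
  have hsum := finrank_sup_add_finrank_inf_eq U W
  rw [hUW, finrank_bot, add_zero] at hsum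
  exact (eq_of_le_of_finrank_le (sup_le hUS hWS) (hsum ▸ hS)).symm

end Submodule

open Submodule in
theorem stmt2_general (K : Type*) [Field K] (V : Type*) [AddCommGroup V] [Module K V]
    [FiniteDimensional K V] (k : ℕ)
    (U W : Submodule K V)
    (hU : Module.finrank K U = k) (hW : Module.finrank K W = k)
    (hUW : U ⊓ W = ⊥)
    (x : Fin (k + 1) → Submodule K V)
    (hx0 : x 0 = U) (hxk : x (Fin.last k) = W)
    (hdim : ∀ i, Module.finrank K (x i) = k)
    (hchain : ∀ i : Fin k, k - 1 ≤ Module.finrank K ↥(x i.castSucc ⊓ x i.succ)) :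
    ∀ i, x i ≤ U ⊔ W := by
  have hxS (i) : x i ≤ partialSups x (Fin.last k) := le_partialSups_of_le x (Fin.le_last i)
  have hS : finrank K (partialSups x (Fin.last k)) ≤ k + k := by
    have hstep (i : Fin k) := (hdim i.succ).trans_le (Nat.le_add_of_sub_le (hchain i))
    simpa only [hdim 0, Fin.val_last] using finrank_partialSups_le x hstep (Fin.last k)
  have hSUW := eq_sup_of_finrank_le_of_inf_eq_bot (hx0 ▸ hxS 0) (hxk ▸ hxS _) hUW
    (by rw [hU, hW]; exact hS)
  exact fun i => hSUW ▸ hxS i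

/-- If `x_0 = U, x_1, ..., x_k = W` is a chain of `k`-dimensional subspaces
with `dim(x_i ∩ x_{i+1}) ≥ k - 1` for consecutive members, and `U ∩ W = 0`, then every
`x_i` is contained in `U + W`. -/
theorem stmt2 (K : Type*) [Field K] (V : Type*) [AddCommGroup V] [Module K V]
    [FiniteDimensional K V] (k : ℕ) (hk : 1 ≤ k)
    (U W : Submodule K V)
    (hU : Module.finrank K U = k) (hW : Module.finrank K W = k)
    (hUW : U ⊓ W = ⊥)
    (x : Fin (k + 1) → Submodule K V)
    (hx0 : x 0 = U) (hxk : x (Fin.last k) = W)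
    (hdim : ∀ i, Module.finrank K (x i) = k)
    (hchain : ∀ i : Fin k, k - 1 ≤ Module.finrank K ↥(x i.castSucc ⊓ x i.succ)) :
    ∀ i, x i ≤ U ⊔ W :=
  stmt2_general K V k U W hU hW hUW x hx0 hxk hdim hchain
end

section
/- Let K be a field (e.g. ℂ), V a finite-dimensional K-vector space, and k ≥ 1. Let U and W be k-dimensional linear subspaces of V with U ∩ W = 0, and let x_0, x_1, ..., x_k be a chain of k-dimensional linear subspaces of V with x_0 = U, x_k = W, and dim(x_i ∩ x_{i+1}) ≥ k − 1 for all 0 ≤ i ≤ k − 1. Then for every 0 ≤ i ≤ k one has dim(x_i ∩ U) = k − i and dim(x_i ∩ W) = i, and moreover x_i = (x_i ∩ U) + (x_i ∩ W). -/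
/-!
Moving one step along the chain changes `dim (x_i ∩ S)` by at most one, for any fixed `S`, because
`x_i` and `x_{i+1}` share a hyperplane. Starting from `x_0 = U` this gives `dim (x_i ∩ U) ≥ k - i`, and
going back from `x_k = W` it gives `dim (x_i ∩ W) ≥ i`. Since `U ∩ W = 0`, the two intersections are
independent subspaces of the `k`-dimensional `x_i`, so both bounds are equalities and they span `x_i`.
-/

namespace Submodule

variable {K V : Type*} [Field K] [AddCommGroup V] [Module K V] [FiniteDimensional K V]

theorem finrank_inf_add_finrank_inf_le (Y Z S : Submodule K V) :
    Module.finrank K ↥(Y ⊓ S) + Module.finrank K ↥(Y ⊓ Z) ≤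
      Module.finrank K ↥(Z ⊓ S) + Module.finrank K Y := by
  have h_inf : (Y ⊓ S) ⊓ (Y ⊓ Z) ≤ Z ⊓ S :=
    le_inf (inf_le_right.trans inf_le_right) (inf_le_left.trans inf_le_right)
  have h_sup : (Y ⊓ S) ⊔ (Y ⊓ Z) ≤ Y := sup_le inf_le_left inf_le_left
  have := finrank_sup_add_finrank_inf_eq (Y ⊓ S) (Y ⊓ Z)
  have := finrank_mono h_inf
  have := finrank_mono h_sup
  omega

theorem finrank_inf_le_finrank_inf_add_one {k : ℕ} {Y Z : Submodule K V}
    (hY : Module.finrank K Y = k) (hYZ : k - 1 ≤ Module.finrank K ↥(Y ⊓ Z)) (S : Submodule K V) :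
    Module.finrank K ↥(Y ⊓ S) ≤ Module.finrank K ↥(Z ⊓ S) + 1 := by
  have := finrank_inf_add_finrank_inf_le Y Z S
  omega

theorem finrank_inf_add_finrank_inf_of_disjoint {A B : Submodule K V} (hAB : Disjoint A B)
    (Y : Submodule K V) :
    Module.finrank K ↥(Y ⊓ A) + Module.finrank K ↥(Y ⊓ B) =
      Module.finrank K ↥((Y ⊓ A) ⊔ (Y ⊓ B)) := by
  have h_sum := finrank_sup_add_finrank_inf_eq (Y ⊓ A) (Y ⊓ B)
  rwa [(hAB.mono inf_le_right inf_le_right).eq_bot, finrank_bot, add_zero, eq_comm] at h_sum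

theorem finrank_inf_add_finrank_inf_le_finrank {A B : Submodule K V} (hAB : Disjoint A B)
    (Y : Submodule K V) :
    Module.finrank K ↥(Y ⊓ A) + Module.finrank K ↥(Y ⊓ B) ≤ Module.finrank K Y :=
  finrank_inf_add_finrank_inf_of_disjoint hAB Y ▸ finrank_mono (sup_le inf_le_left inf_le_left)

theorem eq_inf_sup_inf_of_le_finrank_add {A B Y : Submodule K V} (hAB : Disjoint A B)
    (hY : Module.finrank K Y ≤ Module.finrank K ↥(Y ⊓ A) + Module.finrank K ↥(Y ⊓ B)) :
    Y = (Y ⊓ A) ⊔ (Y ⊓ B) := by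
  have h_le : (Y ⊓ A) ⊔ (Y ⊓ B) ≤ Y := sup_le inf_le_left inf_le_left
  refine (eq_of_le_of_finrank_eq h_le (le_antisymm (finrank_mono h_le) ?_)).symm
  rwa [← finrank_inf_add_finrank_inf_of_disjoint hAB]

end Submodule

namespace Fin

theorem apply_zero_le_add_of_le_succ_add_one {n : ℕ} {f : Fin (n + 1) → ℕ}
    (hf : ∀ i : Fin n, f i.castSucc ≤ f i.succ + 1) (i : Fin (n + 1)) : f 0 ≤ f i + i := by
  induction i using Fin.induction with
  | zero => simp
  | succ i ih =>
    have := hf i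
    simp only [val_succ, val_castSucc] at ih ⊢
    omega

theorem apply_last_le_add_of_le_castSucc_add_one {n : ℕ} {f : Fin (n + 1) → ℕ}
    (hf : ∀ i : Fin n, f i.succ ≤ f i.castSucc + 1) (i : Fin (n + 1)) :
    f (last n) ≤ f i + (n - i) := by
  have := apply_zero_le_add_of_le_succ_add_one (f := f ∘ rev)
    (fun j ↦ by simpa only [Function.comp, rev_castSucc, rev_succ] using hf j.rev) i.rev
  simpa only [Function.comp, rev_zero, rev_rev, val_rev, Nat.add_sub_add_right] using this

end Fin

theorem stmt3_general (K : Type*) [Field K] (V : Type*) [AddCommGroup V] [Module K V]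
    [FiniteDimensional K V] (k : ℕ)
    (U W : Submodule K V)
    (hU : Module.finrank K U = k) (hW : Module.finrank K W = k)
    (hUW : U ⊓ W = ⊥)
    (x : Fin (k + 1) → Submodule K V)
    (hx0 : x 0 = U) (hxk : x (Fin.last k) = W)
    (hdim : ∀ i, Module.finrank K (x i) = k)
    (hchain : ∀ i : Fin k, k - 1 ≤ Module.finrank K ↥(x i.castSucc ⊓ x i.succ)) :
    ∀ i : Fin (k + 1),
      Module.finrank K ↥(x i ⊓ U) = k - i.1 ∧
      Module.finrank K ↥(x i ⊓ W) = i.1 ∧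
      x i = (x i ⊓ U) ⊔ (x i ⊓ W) := by
  intro i
  have h_fwd (S : Submodule K V) (j : Fin k) :
      Module.finrank K ↥(x j.castSucc ⊓ S) ≤ Module.finrank K ↥(x j.succ ⊓ S) + 1 :=
    Submodule.finrank_inf_le_finrank_inf_add_one (hdim _) (hchain j) S
  have h_bwd (S : Submodule K V) (j : Fin k) :
      Module.finrank K ↥(x j.succ ⊓ S) ≤ Module.finrank K ↥(x j.castSucc ⊓ S) + 1 :=
    Submodule.finrank_inf_le_finrank_inf_add_one (hdim _) (inf_comm (x j.castSucc) _ ▸ hchain j) S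
  have hU_le := Fin.apply_zero_le_add_of_le_succ_add_one
    (f := fun j ↦ Module.finrank K ↥(x j ⊓ U)) (h_fwd U) i
  have hW_le := Fin.apply_last_le_add_of_le_castSucc_add_one
    (f := fun j ↦ Module.finrank K ↥(x j ⊓ W)) (h_bwd W) i
  rw [hx0, inf_idem, hU] at hU_le
  rw [hxk, inf_idem, hW] at hW_le
  have h_disj : Disjoint U W := disjoint_iff.mpr hUW
  have h_sum := Submodule.finrank_inf_add_finrank_inf_le_finrank h_disj (x i)
  have hxi := hdim i
  have hi := i.is_le
  exact ⟨by omega, by omega, Submodule.eq_inf_sup_inf_of_le_finrank_add h_disj (by omega)⟩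

/-- For a chain `x_0 = U, ..., x_k = W` of `k`-dimensional subspaces with
`dim(x_i ∩ x_{i+1}) ≥ k - 1` and `U ∩ W = 0`, one has `dim(x_i ∩ U) = k - i`,
`dim(x_i ∩ W) = i`, and `x_i = (x_i ∩ U) + (x_i ∩ W)` for all `i`. -/
theorem stmt3 (K : Type*) [Field K] (V : Type*) [AddCommGroup V] [Module K V]
    [FiniteDimensional K V] (k : ℕ) (hk : 1 ≤ k)
    (U W : Submodule K V)
    (hU : Module.finrank K U = k) (hW : Module.finrank K W = k)
    (hUW : U ⊓ W = ⊥)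
    (x : Fin (k + 1) → Submodule K V)
    (hx0 : x 0 = U) (hxk : x (Fin.last k) = W)
    (hdim : ∀ i, Module.finrank K (x i) = k)
    (hchain : ∀ i : Fin k, k - 1 ≤ Module.finrank K ↥(x i.castSucc ⊓ x i.succ)) :
    ∀ i : Fin (k + 1),
      Module.finrank K ↥(x i ⊓ U) = k - i.1 ∧
      Module.finrank K ↥(x i ⊓ W) = i.1 ∧
      x i = (x i ⊓ U) ⊔ (x i ⊓ W) :=
  stmt3_general K V k U W hU hW hUW x hx0 hxk hdim hchain
end

section
/- Let K be a field (e.g. ℂ), V a finite-dimensional K-vector space, and k ≥ 1. For any two k-dimensional linear subspaces U and W of V there exists a chain x_0, x_1, ..., x_k of k-dimensional linear subspaces of V with x_0 = U, x_k = W, dim(x_i ∩ x_{i+1}) ≥ k − 1 for all 0 ≤ i ≤ k − 1, and x_i ⊆ U + W for every i. (Hence any two points of the Grassmannian G(k, n) are connected by a path of length k, and such a path can be chosen entirely inside the sub-Grassmannian G(k, U + W).) -/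
/-!
Let `d = dim (U ∩ W) < k`. For `w ∈ W \ U`, any `k`-dimensional `U'` with
`(U ∩ W) + K w ≤ U' ≤ U + K w` meets `U` in dimension at least `k - 1` (both lie in the
`(k + 1)`-dimensional space `U + K w`) and meets `W` in dimension at least `d + 1`. Each such
exchange step raises `dim (x ∩ W)` by one, so `k - d ≤ k` steps lead from `U` to `W`.
-/

open Module Submodule

namespace Submodule

variable {K V : Type*} [DivisionRing K] [AddCommGroup V] [Module K V] [FiniteDimensional K V]

theorem exists_le_le_finrank_eq {p q : Submodule K V} (hpq : p ≤ q) {n : ℕ}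
    (hpn : finrank K p ≤ n) (hnq : n ≤ finrank K q) :
    ∃ r : Submodule K V, p ≤ r ∧ r ≤ q ∧ finrank K r = n := by
  induction n, hpn using Nat.le_induction with
  | base => exact ⟨p, le_rfl, hpq, rfl⟩
  | succ n _ ih =>
    obtain ⟨r, hpr, hrq, hr⟩ := ih (by omega)
    have hlt : r < q := lt_of_le_of_ne hrq (by rintro rfl; omega)
    obtain ⟨v, hvq, hvr⟩ := SetLike.exists_of_lt hlt
    refine ⟨r ⊔ span K {v}, le_sup_of_le_left hpr, sup_le hrq ?_, ?_⟩
    · exact (span_singleton_le_iff_mem v q).mpr hvq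
    · rw [finrank_sup_span_singleton hvr, hr]

theorem finrank_inf_lt_of_ne {U W : Submodule K V} (hUW : finrank K U = finrank K W)
    (hne : U ≠ W) : finrank K ↥(U ⊓ W) < finrank K U := by
  refine lt_of_le_of_ne (finrank_mono inf_le_left) fun h => hne ?_
  have hU : U ⊓ W = U := eq_of_le_of_finrank_eq inf_le_left h
  have hW : U ⊓ W = W := eq_of_le_of_finrank_eq inf_le_right (h.trans hUW)
  exact hU.symm.trans hW

theorem exists_exchange_of_ne {U W : Submodule K V} (hUW : finrank K U = finrank K W)
    (hne : U ≠ W) :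
    ∃ U' : Submodule K V, finrank K U' = finrank K U ∧
      finrank K U - 1 ≤ finrank K ↥(U ⊓ U') ∧ U' ≤ U ⊔ W ∧
      finrank K ↥(U ⊓ W) + 1 ≤ finrank K ↥(U' ⊓ W) := by
  have hd := finrank_inf_lt_of_ne hUW hne
  obtain ⟨w, hwW, hwU⟩ : ∃ w ∈ W, w ∉ U := SetLike.not_le_iff_exists.mp fun hWU =>
    hne (eq_of_le_of_finrank_eq hWU hUW.symm).symm
  have hwUW : w ∉ U ⊓ W := fun h => hwU h.1
  have hw : span K {w} ≤ W := (span_singleton_le_iff_mem w W).mpr hwW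
  obtain ⟨U', hlow, hup, hU'⟩ := exists_le_le_finrank_eq
    (sup_le_sup_right (inf_le_left : U ⊓ W ≤ U) (span K {w}))
    (n := finrank K U) (by rw [finrank_sup_span_singleton hwUW]; omega)
    (by rw [finrank_sup_span_singleton hwU]; omega)
  refine ⟨U', hU', ?_, hup.trans (sup_le_sup_left hw U), ?_⟩
  · have hsum := finrank_sup_add_finrank_inf_eq U U'
    have hsup := finrank_mono (sup_le le_sup_left hup)
    rw [finrank_sup_span_singleton hwU] at hsup
    omega
  · rw [← finrank_sup_span_singleton hwUW]
    exact finrank_mono (le_inf hlow (sup_le inf_le_right hw))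

theorem exists_chain_of_le_finrank_inf_add {k : ℕ} (n : ℕ) {U W : Submodule K V}
    (hU : finrank K U = k) (hW : finrank K W = k) (hk : k ≤ finrank K ↥(U ⊓ W) + n) :
    ∃ x : ℕ → Submodule K V, x 0 = U ∧ x n = W ∧ (∀ i, finrank K (x i) = k) ∧
      (∀ i, k - 1 ≤ finrank K ↥(x i ⊓ x (i + 1))) ∧ ∀ i, x i ≤ U ⊔ W := by
  rcases eq_or_ne U W with rfl | hne
  · refine ⟨fun _ => U, rfl, rfl, fun _ => hU, fun _ => ?_, fun _ => le_sup_left⟩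
    rw [inf_idem, hU]
    exact Nat.sub_le k 1
  cases n with
  | zero =>
    have := finrank_inf_lt_of_ne (hU.trans hW.symm) hne
    omega
  | succ n =>
    obtain ⟨U', hU', hUU', hU'le, hU'W⟩ := exists_exchange_of_ne (hU.trans hW.symm) hne
    obtain ⟨y, hy0, hyn, hyrank, hystep, hyle⟩ :=
      exists_chain_of_le_finrank_inf_add n (hU'.trans hU) hW (by omega)
    refine ⟨fun | 0 => U | i + 1 => y i, rfl, hyn, ?_, ?_, ?_⟩
    · rintro (_ | i)
      exacts [hU, hyrank i]
    · rintro (_ | i)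
      · show k - 1 ≤ finrank K ↥(U ⊓ y 0)
        rw [hy0, ← hU]
        exact hUU'
      · exact hystep i
    · rintro (_ | i)
      exacts [le_sup_left, (hyle i).trans (sup_le hU'le le_sup_right)]

end Submodule

theorem stmt4_general (K : Type*) [Field K] (V : Type*) [AddCommGroup V] [Module K V]
    [FiniteDimensional K V] (k : ℕ)
    (U W : Submodule K V)
    (hU : Module.finrank K U = k) (hW : Module.finrank K W = k) :
    ∃ x : Fin (k + 1) → Submodule K V,
      x 0 = U ∧ x (Fin.last k) = W ∧
      (∀ i, Module.finrank K (x i) = k) ∧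
      (∀ i : Fin k, k - 1 ≤ Module.finrank K ↥(x i.castSucc ⊓ x i.succ)) ∧
      ∀ i, x i ≤ U ⊔ W := by
  obtain ⟨x, hx0, hxk, hrank, hstep, hle⟩ :=
    exists_chain_of_le_finrank_inf_add k hU hW (Nat.le_add_left k _)
  exact ⟨fun i => x i, hx0, hxk, fun i => hrank i, fun i => hstep i, fun i => hle i⟩

/-- Any two `k`-dimensional subspaces `U`, `W` of `V` are connected by a
chain `x_0 = U, x_1, ..., x_k = W` of `k`-dimensional subspaces with
`dim(x_i ∩ x_{i+1}) ≥ k - 1` for consecutive members, and with every `x_i ⊆ U + W`. -/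
theorem stmt4 (K : Type*) [Field K] (V : Type*) [AddCommGroup V] [Module K V]
    [FiniteDimensional K V] (k : ℕ) (hk : 1 ≤ k)
    (U W : Submodule K V)
    (hU : Module.finrank K U = k) (hW : Module.finrank K W = k) :
    ∃ x : Fin (k + 1) → Submodule K V,
      x 0 = U ∧ x (Fin.last k) = W ∧
      (∀ i, Module.finrank K (x i) = k) ∧
      (∀ i : Fin k, k - 1 ≤ Module.finrank K ↥(x i.castSucc ⊓ x i.succ)) ∧
      ∀ i, x i ≤ U ⊔ W :=
  stmt4_general K V k U W hU hW
end
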